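/- Let w be a permutation of {1,...,n} (no sign changes) with w(n) = p+1, and let w' be a signed permutation that acts separately as signed permutations on {1,...,p} and {p+2,...,n} and sends p+1 to ±(p+1) with an even total number of sign changes. Then in the polynomial ring ℚ[Y_1,...,Y_n], applying the substitution X_i ↦ Y_{w'(w(i))} (with Y_{p+1} ↦ 0 and Y_{-j} = -Y_j) to the polynomial X_1···X_{n-1}·∏_{i ≤ p < p+1 < j}(X_{w^{-1}(i)} - Y_j)(X_{w^{-1}(i)} + Y_j) yields (-1)^{m} ∏_{i ≠ p+1} Y_i · ∏_{i ≤ p, j ≥ p+2}(Y_i + Y_j)(Y_i - Y_j), where m = #{i ≠ p+1 : w'(i) < 0}. If instead w' is a signed permutation not of the above form (either w'(p+1) ≠ ±(p+1), or w' fails to preserve the sets {±1,...,±p} and {±(p+2),...,±n}), then the same substitution yields 0. -/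

import Mathlib

/-! When `w'` fixes `p+1`, the substitution turns `X_1⋯X_{n-1}` into the monomial
`∏_{i ≠ p+1} Y_i`, reindexed by `w` and then by `w'`, with one sign `-1` per negated letter.
Each pair of factors becomes `Y_{w'(a)}² - Y_b²`, which forgets the sign of `w'(a)`, and
reindexing by `w'` (which preserves `{1,…,p}`) gives the claimed double product.
Otherwise either some letter lands on `Y_{p+1} = 0`, or some `a ≤ p` has `w'(a) = ±b` with
`b ≥ p+2`, and the factor `Y_b² - Y_b²` vanishes. -/

open Finset MvPolynomial

/-- The value `Y_{w'(a)}` of the substitution for the signed permutation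
`w' = (σ', ε')`, with the conventions `Y_{-j} = -Y_j` and `Y_{p+1} = 0`
(index `p` is the 0-indexed version of `p+1`). -/
noncomputable def sval (n p : ℕ) (h : p < n) (σ' : Equiv.Perm (Fin n))
    (ε' : Fin n → Bool) (a : Fin n) : MvPolynomial (Fin n) ℚ :=
  if σ' a = (⟨p, h⟩ : Fin n) then 0
  else if ε' a then -X (σ' a) else X (σ' a)

theorem Equiv.Perm.exists_apply_not_of_not_forall_iff {α : Type*} [Finite α] (σ : Equiv.Perm α)
    (P : α → Prop) (h : ¬ ∀ a, P a ↔ P (σ a)) : ∃ a, P a ∧ ¬ P (σ a) := by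
  by_contra! hinto
  have himg : σ '' {a | P a} = {a | P a} :=
    Set.map_eq_of_subset (f := σ.toEmbedding) (by rintro _ ⟨a, ha, rfl⟩; exact hinto a ha)
  refine h fun a => ⟨hinto a, fun ha => ?_⟩
  obtain ⟨b, hb, hba⟩ : σ a ∈ σ '' {a | P a} := by rwa [himg]
  rwa [← σ.injective hba]

theorem Finset.prod_filter_ne_comp_perm {α M : Type*} [Fintype α] [DecidableEq α] [CommMonoid M]
    (e : Equiv.Perm α) (f : α → M) {x y : α} (h : e x = y) :
    ∏ i ∈ univ.filter (· ≠ x), f (e i) = ∏ a ∈ univ.filter (· ≠ y), f a :=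
  prod_equiv e (by simp [← h]) (fun _ _ => rfl)

theorem Fin.filter_val_lt_pred_eq_filter_ne {n : ℕ} (hn : n - 1 < n) :
    univ.filter (fun i : Fin n => i.val < n - 1) = univ.filter (· ≠ ⟨n - 1, hn⟩) := by
  ext i
  simp only [mem_filter, mem_univ, true_and, ne_eq, Fin.ext_iff]
  omega

section sval

variable {n p : ℕ} {h : p < n} {σ' : Equiv.Perm (Fin n)} {ε' : Fin n → Bool}

theorem sval_of_eq {a : Fin n} (ha : σ' a = ⟨p, h⟩) : sval n p h σ' ε' a = 0 :=
  if_pos ha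

theorem sval_of_ne {a : Fin n} (ha : σ' a ≠ ⟨p, h⟩) :
    sval n p h σ' ε' a = (if ε' a then -1 else 1) * X (σ' a) := by
  rw [sval, if_neg ha]
  split_ifs <;> simp

theorem sval_sub_mul_sval_add_of_ne {a : Fin n} (ha : σ' a ≠ ⟨p, h⟩) (b : Fin n) :
    (sval n p h σ' ε' a - X b) * (sval n p h σ' ε' a + X b) =
      (X (σ' a) + X b) * (X (σ' a) - X b) := by
  rw [sval_of_ne ha]
  split_ifs <;> ring

theorem prod_sval_filter_lt_comp_perm (w : Equiv.Perm (Fin n)) (hn : n - 1 < n)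
    (hw : w ⟨n - 1, hn⟩ = ⟨p, h⟩) :
    ∏ i ∈ univ.filter (fun i : Fin n => i.val < n - 1), sval n p h σ' ε' (w i) =
      ∏ a ∈ univ.filter (· ≠ ⟨p, h⟩), sval n p h σ' ε' a := by
  rw [Fin.filter_val_lt_pred_eq_filter_ne hn, prod_filter_ne_comp_perm w _ hw]

theorem prod_sval_filter_ne_of_apply_eq (hfix : σ' ⟨p, h⟩ = ⟨p, h⟩) :
    ∏ a ∈ univ.filter (· ≠ ⟨p, h⟩), sval n p h σ' ε' a =
      (-1) ^ (univ.filter fun i : Fin n => i ≠ ⟨p, h⟩ ∧ ε' i = true).card *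
        ∏ i ∈ univ.filter (· ≠ ⟨p, h⟩), X i := by
  have hne : ∀ a ∈ univ.filter (· ≠ ⟨p, h⟩), σ' a ≠ ⟨p, h⟩ := fun a ha =>
    hfix ▸ σ'.injective.ne (mem_filter.mp ha).2
  rw [prod_congr rfl fun a ha => sval_of_ne (ε' := ε') (hne a ha), prod_mul_distrib,
    ← prod_filter_ne_comp_perm σ' X hfix, prod_ite, filter_filter]
  simp

theorem prod_sval_filter_ne_eq_zero_of_apply_ne (hmove : σ' ⟨p, h⟩ ≠ ⟨p, h⟩) :
    ∏ a ∈ univ.filter (· ≠ ⟨p, h⟩), sval n p h σ' ε' a = 0 :=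
  prod_eq_zero (i := σ'.symm ⟨p, h⟩)
    (mem_filter.mpr ⟨mem_univ _, fun hp => hmove (σ'.symm_apply_eq.mp hp).symm⟩)
    (sval_of_eq (σ'.apply_symm_apply _))

theorem prod_prod_sval_of_forall_lt_iff (hblock : ∀ a : Fin n, a.val < p ↔ (σ' a).val < p) :
    ∏ a ∈ univ.filter (fun a : Fin n => a.val < p),
      ∏ b ∈ univ.filter (fun b : Fin n => p + 1 ≤ b.val),
        (sval n p h σ' ε' a - X b) * (sval n p h σ' ε' a + X b) =
    ∏ a ∈ univ.filter (fun a : Fin n => a.val < p),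
      ∏ b ∈ univ.filter (fun b : Fin n => p + 1 ≤ b.val), (X a + X b) * (X a - X b) := by
  refine prod_equiv σ' (fun a => by simpa using hblock a) fun a ha => prod_congr rfl fun b _ => ?_
  refine sval_sub_mul_sval_add_of_ne (fun hp => ?_) b
  simpa [hp] using (hblock a).mp (mem_filter.mp ha).2

theorem prod_prod_sval_eq_zero {a₀ : Fin n} (ha₀ : a₀.val < p) (hσa₀ : p + 1 ≤ (σ' a₀).val) :
    ∏ a ∈ univ.filter (fun a : Fin n => a.val < p),
      ∏ b ∈ univ.filter (fun b : Fin n => p + 1 ≤ b.val),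
        (sval n p h σ' ε' a - X b) * (sval n p h σ' ε' a + X b) = 0 := by
  refine prod_eq_zero (i := a₀) (by simpa using ha₀)
    (prod_eq_zero (i := σ' a₀) (by simpa using hσa₀) ?_)
  rw [sval_sub_mul_sval_add_of_ne (fun hp => by simp [hp] at hσa₀), sub_self, mul_zero]

end sval

-- Since `X_{w⁻¹(i)}` substitutes to `Y_{w'(i)}`, the double product does not involve `w`.
/-- applying the substitution `X_i ↦ Y_{w'(w(i))}` (with
`Y_{p+1} ↦ 0`, `Y_{-j} = -Y_j`) to
`X_1⋯X_{n-1} ∏_{i ≤ p < p+1 < j} (X_{w⁻¹(i)} - Y_j)(X_{w⁻¹(i)} + Y_j)` yields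
`(-1)^m ∏_{i ≠ p+1} Y_i ∏_{i ≤ p, j ≥ p+2} (Y_i + Y_j)(Y_i - Y_j)` when `w'`
is in `W_K`-form, and `0` otherwise.  Here `w` is an unsigned permutation with
`w(n) = p+1`, so `X_{w⁻¹(i)}` substitutes to `Y_{w'(i)}`. -/
theorem closed_orbit_restriction_typeD (p q : ℕ) (hq : 1 ≤ q)
    (w : Equiv.Perm (Fin (p + q)))
    (hw : w ⟨p + q - 1, by omega⟩ = ⟨p, by omega⟩)
    (σ' : Equiv.Perm (Fin (p + q))) (ε' : Fin (p + q) → Bool) :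
    ((∀ a : Fin (p + q), a.val < p ↔ (σ' a).val < p) →
      σ' ⟨p, by omega⟩ = ⟨p, by omega⟩ →
      Even ((Finset.univ.filter fun a : Fin (p + q) => ε' a = true).card) →
      (∏ i ∈ Finset.univ.filter (fun i : Fin (p + q) => i.val < p + q - 1),
          sval (p + q) p (by omega) σ' ε' (w i)) *
        ∏ a ∈ Finset.univ.filter (fun a : Fin (p + q) => a.val < p),
          ∏ b ∈ Finset.univ.filter (fun b : Fin (p + q) => p + 1 ≤ b.val),
            ((sval (p + q) p (by omega) σ' ε' a - X b) *
              (sval (p + q) p (by omega) σ' ε' a + X b))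
      = (-1 : MvPolynomial (Fin (p + q)) ℚ) ^
            ((Finset.univ.filter fun i : Fin (p + q) =>
              i ≠ (⟨p, by omega⟩ : Fin (p + q)) ∧ ε' i = true).card) *
          (∏ i ∈ Finset.univ.filter
              (fun i : Fin (p + q) => i ≠ (⟨p, by omega⟩ : Fin (p + q))), X i) *
          ∏ a ∈ Finset.univ.filter (fun a : Fin (p + q) => a.val < p),
            ∏ b ∈ Finset.univ.filter (fun b : Fin (p + q) => p + 1 ≤ b.val),
              ((X a + X b) * (X a - X b))) ∧
    (¬ (σ' ⟨p, by omega⟩ = ⟨p, by omega⟩ ∧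
        ∀ a : Fin (p + q), (a.val < p ↔ (σ' a).val < p)) →
      (∏ i ∈ Finset.univ.filter (fun i : Fin (p + q) => i.val < p + q - 1),
          sval (p + q) p (by omega) σ' ε' (w i)) *
        ∏ a ∈ Finset.univ.filter (fun a : Fin (p + q) => a.val < p),
          ∏ b ∈ Finset.univ.filter (fun b : Fin (p + q) => p + 1 ≤ b.val),
            ((sval (p + q) p (by omega) σ' ε' a - X b) *
              (sval (p + q) p (by omega) σ' ε' a + X b)) = 0) := by
  have hpn : p < p + q := by omega
  rw [prod_sval_filter_lt_comp_perm w (by omega) hw]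
  refine ⟨fun hblock hfix _ => ?_, fun hbad => ?_⟩
  · rw [prod_sval_filter_ne_of_apply_eq hfix, prod_prod_sval_of_forall_lt_iff hblock]
  by_cases hfix : σ' ⟨p, hpn⟩ = ⟨p, hpn⟩
  · obtain ⟨a, ha, hσa⟩ : ∃ a : Fin (p + q), a.val < p ∧ ¬ (σ' a).val < p :=
      σ'.exists_apply_not_of_not_forall_iff (fun a => a.val < p) fun hblock => hbad ⟨hfix, hblock⟩
    have hσa_ne : (σ' a).val ≠ p := fun hp =>
      ha.ne (congrArg Fin.val (σ'.injective ((Fin.ext hp).trans hfix.symm)))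
    have hσa_gt : p + 1 ≤ (σ' a).val := by omega
    rw [prod_prod_sval_eq_zero ha hσa_gt, mul_zero]
  · rw [prod_sval_filter_ne_eq_zero_of_apply_ne hfix, zero_mul]
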